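/- Let G be a triangle-free simple graph and let H be a spanning subgraph of G (that is, H has the same vertex set as G and every edge of H is an edge of G). Then γ_h(G) ≤ γ_h(H). -/

import Mathlib

/-- A set `S` of vertices is a hop dominating set of `G` if every vertex not in `S`
is at distance exactly 2 from some vertex of `S`. -/
def SimpleGraph.IsHopDominatingSet {V : Type*} (G : SimpleGraph V) (S : Finset V) : Prop :=
  ∀ v : V, v ∉ S → ∃ u ∈ S, G.dist u v = 2

/-- The hop domination number of `G`: the minimum cardinality of a hop dominating set. -/
noncomputable def SimpleGraph.hopDominationNumber {V : Type*} [Fintype V]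
    (G : SimpleGraph V) : ℕ :=
  sInf {k : ℕ | ∃ S : Finset V, G.IsHopDominatingSet S ∧ S.card = k}

/-!
Adding edges to a graph can only shorten distances, so a distance 2 in `H` becomes 1 or 2 in
`G ≥ H`. It cannot become 1: the two endpoints have a common neighbour in `H ≤ G`, so an edge
between them would close a triangle. Hence every hop dominating set of `H` is one of `G`.
-/

namespace SimpleGraph

variable {V : Type*} {G H : SimpleGraph V}

theorem edist_eq_two_of_le_of_cliqueFree (htf : G.CliqueFree 3) (hle : H ≤ G) {u v : V}
    (h : H.edist u v = 2) : G.edist u v = 2 := by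
  obtain ⟨hne, -, w, huw, hvw⟩ := H.edist_eq_two_iff.mp h
  have hwu : G.Adj w u := hle huw.symm
  have hwv : G.Adj w v := hle hvw.symm
  have hnadj : ¬G.Adj u v := G.isIndepSet_neighborSet_of_triangleFree htf w hwu hwv hne
  exact G.edist_eq_two_iff.mpr ⟨hne, hnadj, w, hwu.symm, hwv.symm⟩

theorem dist_eq_two_of_le_of_cliqueFree (htf : G.CliqueFree 3) (hle : H ≤ G) {u v : V}
    (h : H.dist u v = 2) : G.dist u v = 2 := by
  rw [dist, ENat.toNat_eq_iff two_ne_zero] at h ⊢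
  exact edist_eq_two_of_le_of_cliqueFree htf hle h

theorem IsHopDominatingSet.of_le_of_cliqueFree (htf : G.CliqueFree 3) (hle : H ≤ G)
    {S : Finset V} (hS : H.IsHopDominatingSet S) : G.IsHopDominatingSet S := fun v hv ↦ by
  obtain ⟨u, hu, huv⟩ := hS v hv
  exact ⟨u, hu, dist_eq_two_of_le_of_cliqueFree htf hle huv⟩

theorem isHopDominatingSet_univ [Fintype V] : G.IsHopDominatingSet Finset.univ :=
  fun v hv ↦ absurd (Finset.mem_univ v) hv

theorem exists_isHopDominatingSet_card_eq_hopDominationNumber [Fintype V] :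
    ∃ S : Finset V, G.IsHopDominatingSet S ∧ S.card = G.hopDominationNumber :=
  Nat.sInf_mem (s := {k | ∃ S : Finset V, G.IsHopDominatingSet S ∧ S.card = k})
    ⟨_, Finset.univ, isHopDominatingSet_univ, rfl⟩

theorem IsHopDominatingSet.hopDominationNumber_le_card [Fintype V] {S : Finset V}
    (hS : G.IsHopDominatingSet S) : G.hopDominationNumber ≤ S.card :=
  Nat.sInf_le ⟨S, hS, rfl⟩

end SimpleGraph

theorem hop_domination_spanning_subgraph {V : Type*} [Fintype V]
    (G H : SimpleGraph V) (htf : G.CliqueFree 3) (hsub : H ≤ G) :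
    G.hopDominationNumber ≤ H.hopDominationNumber := by
  obtain ⟨S, hS, hcard⟩ := H.exists_isHopDominatingSet_card_eq_hopDominationNumber
  exact hcard ▸ (hS.of_le_of_cliqueFree htf hsub).hopDominationNumber_le_card
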